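/- arXiv:2501.11766 — 2 statements merged into one kernel-verified Lean document; each statement's English description precedes it below -/
import Mathlib

section
/- Let k ≥ 1 be an integer and N > 1 a real number. Define for t large: Φ(t) = t²·(ln t²)²·(ln^{(2)} t²)²⋯(ln^{(k−1)} t²)²·(ln^{(k)} t²)^{2N}, Ψ(t) = t·(ln t²)·(ln^{(2)} t²)⋯(ln^{(k−1)} t²)·(ln^{(k)} t²)^{N} (so Ψ = √Φ), and H(t) = t²·(ln t)·(ln^{(2)} t)⋯(ln^{(k−1)} t)·(ln^{(k)} t)^{N}. Then there exist constants c, C, t₀ > 0 depending only on k and N such that c·Φ(t) ≤ Ψ(H(t)) ≤ C·Φ(t) for all t ≥ t₀. -/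
/-- `Φ(t) = t²·(ln t²)²·(ln^[2] t²)²⋯(ln^[k-1] t²)²·(ln^[k] t²)^(2N)`. -/
noncomputable def PhiKN (k : ℕ) (N : ℝ) (t : ℝ) : ℝ :=
  t ^ 2 * (∏ i ∈ Finset.Ico 1 k, (Real.log^[i] (t ^ 2)) ^ 2) *
    (Real.log^[k] (t ^ 2)) ^ (2 * N)

/-- `Ψ(t) = t·(ln t²)·(ln^[2] t²)⋯(ln^[k-1] t²)·(ln^[k] t²)^N`, so `Ψ = √Φ`. -/
noncomputable def PsiKN (k : ℕ) (N : ℝ) (t : ℝ) : ℝ :=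
  t * (∏ i ∈ Finset.Ico 1 k, Real.log^[i] (t ^ 2)) * (Real.log^[k] (t ^ 2)) ^ N

/-- `H(t) = t²·(ln t)·(ln^[2] t)⋯(ln^[k-1] t)·(ln^[k] t)^N`. -/
noncomputable def HKN (k : ℕ) (N : ℝ) (t : ℝ) : ℝ :=
  t ^ 2 * (∏ i ∈ Finset.Ico 1 k, Real.log^[i] t) * (Real.log^[k] t) ^ N

/-!
With `w(x) = ∏_{1 ≤ i < k} log^[i] x · (log^[k] x)^N` one has `H(t) = t² w(t)`, `Ψ(x) = x w(x²)`
and `Φ(t) = t² w(t²)²`, so `Ψ(H(t)) = t² w(t) w(H(t)²)`. The weight `w` hardly notices when its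
argument `x` is replaced by some `y` with `x ≤ y ≤ xⁿ`: each iterated logarithm grows by a factor
at most `n`, since `log^[i] (xⁿ) = log^[i-1] (n log x) ≤ n log^[i] x`. As `1 ≤ w(t) ≤ t²` for
large `t`, both `t ↦ t²` and `t² ↦ H(t)² ≤ (t²)⁴` are such replacements, so
`w(t) ≍ w(t²) ≍ w(H(t)²)` and `Ψ(H(t)) ≍ t² w(t²)² = Φ(t)`.
-/

open Real Filter Asymptotics Finset

lemma tendsto_iterate_log_atTop (i : ℕ) : Tendsto (log^[i]) atTop atTop :=
  tendsto_log_atTop.iterate i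

lemma monotoneOn_iterate_log : ∀ i, MonotoneOn (log^[i]) (Set.Ici (exp^[i] 0))
  | 0 => monotone_id.monotoneOn _
  | i + 1 => fun x hx y _ hxy => by
    rw [Set.mem_Ici, Function.iterate_succ_apply'] at hx
    have hx0 : 0 < x := (exp_pos _).trans_le hx
    simp only [Function.iterate_succ_apply]
    exact monotoneOn_iterate_log i ((le_log_iff_exp_le hx0).2 hx)
      ((le_log_iff_exp_le (hx0.trans_le hxy)).2 (hx.trans hxy)) (log_le_log hx0 hxy)

lemma eventually_iterate_log_le_self : ∀ i, ∀ᶠ x in atTop, log^[i] x ≤ x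
  | 0 => by simp
  | i + 1 => by
    filter_upwards [eventually_iterate_log_le_self i,
      (tendsto_iterate_log_atTop i).eventually_ge_atTop 0] with x h h0
    rw [Function.iterate_succ_apply']
    exact (log_le_self h0).trans h

lemma eventually_iterate_log_le_log {i : ℕ} (hi : i ≠ 0) : ∀ᶠ x in atTop, log^[i] x ≤ log x := by
  obtain ⟨j, rfl⟩ := Nat.exists_eq_succ_of_ne_zero hi
  simpa only [Function.iterate_succ_apply] using
    tendsto_log_atTop.eventually (eventually_iterate_log_le_self j)

lemma log_mul_le_mul_log {a z : ℝ} (ha : 1 ≤ a) (hz : exp 1 ≤ z) : log (a * z) ≤ a * log z := by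
  have hz0 : 0 < z := (exp_pos 1).trans_le hz
  have h1 : 1 ≤ log z := (le_log_iff_exp_le hz0).2 hz
  rw [log_mul (by positivity) hz0.ne']
  nlinarith [log_le_sub_one_of_pos (zero_lt_one.trans_le ha)]

lemma eventually_iterate_log_mul_le {a : ℝ} (ha : 1 ≤ a) :
    ∀ i, ∀ᶠ y in atTop, log^[i] (a * y) ≤ a * log^[i] y
  | 0 => by simp
  | i + 1 => by
    have h_tendsto : Tendsto (fun y => log^[i] (a * y)) atTop atTop :=
      (tendsto_iterate_log_atTop i).comp (tendsto_id.const_mul_atTop (by linarith))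
    filter_upwards [eventually_iterate_log_mul_le ha i, h_tendsto.eventually_gt_atTop 0,
      (tendsto_iterate_log_atTop i).eventually_ge_atTop (exp 1)] with y h hpos he
    simp only [Function.iterate_succ_apply']
    exact (log_le_log hpos h).trans (log_mul_le_mul_log ha he)

lemma eventually_iterate_log_pow_le {n i : ℕ} (hn : n ≠ 0) (hi : i ≠ 0) :
    ∀ᶠ x in atTop, log^[i] (x ^ n) ≤ n * log^[i] x := by
  obtain ⟨j, rfl⟩ := Nat.exists_eq_succ_of_ne_zero hi
  have hn1 : (1 : ℝ) ≤ n := by exact_mod_cast Nat.one_le_iff_ne_zero.2 hn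
  simpa only [Function.iterate_succ_apply, log_pow] using
    tendsto_log_atTop.eventually (eventually_iterate_log_mul_le hn1 j)

lemma isTheta_of_le_of_le_mul {α : Type*} {l : Filter α} {f g : α → ℝ} (c : ℝ)
    (hg : 0 ≤ᶠ[l] g) (hgf : g ≤ᶠ[l] f) (hfg : ∀ᶠ x in l, f x ≤ c * g x) : f =Θ[l] g := by
  refine ⟨.of_bound c ?_, .of_bound 1 ?_⟩ <;> filter_upwards [hg, hgf, hfg] with x h0 h1 h2
  · rw [norm_of_nonneg (h0.trans h1), norm_of_nonneg h0]
    exact h2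
  · rw [norm_of_nonneg (h0.trans h1), norm_of_nonneg h0, one_mul]
    exact h1

lemma exists_pos_bounds_of_isTheta {f g : ℝ → ℝ} (h : f =Θ[atTop] g) (hf : 0 ≤ᶠ[atTop] f)
    (hg : 0 ≤ᶠ[atTop] g) :
    ∃ c : ℝ, 0 < c ∧ ∃ C : ℝ, 0 < C ∧ ∃ t₀ : ℝ, 0 < t₀ ∧
      ∀ t, t₀ ≤ t → c * g t ≤ f t ∧ f t ≤ C * g t := by
  obtain ⟨C, hC, hfg⟩ := h.isBigO.exists_pos
  obtain ⟨c, hc, hgf⟩ := h.symm.isBigO.exists_pos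
  obtain ⟨t₁, ht₁⟩ := eventually_atTop.1 (hfg.bound.and (hgf.bound.and (hf.and hg)))
  refine ⟨c⁻¹, inv_pos.2 hc, C, hC, max t₁ 1, lt_max_of_lt_right one_pos, fun t ht => ?_⟩
  obtain ⟨h1, h2, hf0, hg0⟩ := ht₁ t (le_of_max_le_left ht)
  rw [norm_of_nonneg hf0, norm_of_nonneg hg0] at h1 h2
  exact ⟨(inv_mul_le_iff₀ hc).2 h2, h1⟩

noncomputable def logWeight (k : ℕ) (N x : ℝ) : ℝ :=
  (∏ i ∈ Ico 1 k, log^[i] x) * (log^[k] x) ^ N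

section Sandwich

variable {α : Type*} {l : Filter α} {u v : α → ℝ} {n : ℕ}

lemma isTheta_iterate_log_of_le_of_le_pow (hu : Tendsto u l atTop) (huv : u ≤ᶠ[l] v)
    (hvu : ∀ᶠ x in l, v x ≤ u x ^ n) (hn : n ≠ 0) {i : ℕ} (hi : i ≠ 0) :
    (fun x => log^[i] (v x)) =Θ[l] (fun x => log^[i] (u x)) := by
  have hlarge := hu.eventually_ge_atTop (exp^[i] 0)
  have hmono := monotoneOn_iterate_log i
  refine isTheta_of_le_of_le_mul n ?_ ?_ ?_
  · exact ((tendsto_iterate_log_atTop i).comp hu).eventually_ge_atTop 0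
  · filter_upwards [hlarge, huv] with x hx h
    exact hmono hx (hx.trans h) h
  · filter_upwards [hlarge, huv, hvu, hu.eventually (eventually_iterate_log_pow_le hn hi)]
      with x hx h1 h2 hpow
    exact (hmono (hx.trans h1) (hx.trans (h1.trans h2)) h2).trans hpow

lemma isTheta_logWeight_of_le_of_le_pow (hu : Tendsto u l atTop) (huv : u ≤ᶠ[l] v)
    (hvu : ∀ᶠ x in l, v x ≤ u x ^ n) (hn : n ≠ 0) {k : ℕ} (hk : k ≠ 0) (N : ℝ) :
    (fun x => logWeight k N (v x)) =Θ[l] (fun x => logWeight k N (u x)) := by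
  have hv : Tendsto v l atTop := tendsto_atTop_mono' l huv hu
  have hlog {i : ℕ} (hi : i ≠ 0) := isTheta_iterate_log_of_le_of_le_pow hu huv hvu hn hi
  refine (IsTheta.finsetProd fun i hi => hlog ?_).mul ((hlog hk).rpow ?_ ?_)
  · exact Nat.one_le_iff_ne_zero.1 (mem_Ico.1 hi).1
  · exact ((tendsto_iterate_log_atTop k).comp hv).eventually_ge_atTop 0
  · exact ((tendsto_iterate_log_atTop k).comp hu).eventually_ge_atTop 0

end Sandwich

lemma eventually_one_le_logWeight (k : ℕ) {N : ℝ} (hN : 0 ≤ N) :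
    ∀ᶠ x in atTop, 1 ≤ logWeight k N x := by
  filter_upwards [(eventually_all_finset (Ico 1 k)).2 fun i _ =>
      (tendsto_iterate_log_atTop i).eventually_ge_atTop 1,
    (tendsto_iterate_log_atTop k).eventually_ge_atTop 1] with x hprod hlast
  exact one_le_mul_of_one_le_of_one_le (one_le_prod hprod) (one_le_rpow hlast hN)

lemma eventually_logWeight_le_sq {k : ℕ} (hk : k ≠ 0) {N : ℝ} (hN : 0 ≤ N) :
    ∀ᶠ x in atTop, logWeight k N x ≤ x ^ 2 := by
  have hlittle : (fun x => log x ^ (k - 1) * log x ^ N) =o[atTop] (fun x => x * x ^ (1 : ℝ)) :=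
    isLittleO_pow_log_id_atTop.mul (isLittleO_log_rpow_rpow_atTop N one_pos)
  have hbounds {i : ℕ} (hi : i ≠ 0) : ∀ᶠ x in atTop, 0 ≤ log^[i] x ∧ log^[i] x ≤ log x :=
    ((tendsto_iterate_log_atTop i).eventually_ge_atTop 0).and (eventually_iterate_log_le_log hi)
  filter_upwards [hlittle.bound one_pos, (eventually_all_finset (Ico 1 k)).2 fun i hi =>
      hbounds (Nat.one_le_iff_ne_zero.1 (mem_Ico.1 hi).1), hbounds hk, eventually_ge_atTop 0]
    with x hx hprod ⟨hlast0, hlast⟩ hx0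
  have hprod_le : ∏ i ∈ Ico 1 k, log^[i] x ≤ log x ^ (k - 1) := by
    simpa [Nat.card_Ico] using prod_le_prod (fun i hi => (hprod i hi).1) (fun i hi => (hprod i hi).2)
  calc logWeight k N x ≤ log x ^ (k - 1) * log x ^ N :=
        mul_le_mul hprod_le (rpow_le_rpow hlast0 hlast hN) (by positivity)
          ((prod_nonneg fun i hi => (hprod i hi).1).trans hprod_le)
    _ ≤ ‖log x ^ (k - 1) * log x ^ N‖ := le_norm_self _
    _ ≤ x ^ 2 := by
      rwa [one_mul, rpow_one, norm_of_nonneg (mul_nonneg hx0 hx0), ← sq] at hx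

lemma HKN_eq (k : ℕ) (N t : ℝ) : HKN k N t = t ^ 2 * logWeight k N t :=
  mul_assoc _ _ _

lemma PsiKN_eq (k : ℕ) (N x : ℝ) : PsiKN k N x = x * logWeight k N (x ^ 2) :=
  mul_assoc _ _ _

lemma eventually_PhiKN_eq (k : ℕ) (N : ℝ) :
    ∀ᶠ t in atTop, PhiKN k N t = t ^ 2 * logWeight k N (t ^ 2) ^ 2 := by
  filter_upwards [(tendsto_pow_atTop two_ne_zero).eventually
    ((tendsto_iterate_log_atTop k).eventually_ge_atTop 0)] with t ht
  rw [PhiKN, logWeight, prod_pow, show 2 * N = N * ((2 : ℕ) : ℝ) by push_cast; ring,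
    rpow_mul_natCast ht]
  ring

lemma PsiKN_HKN_eq (k : ℕ) (N t : ℝ) :
    PsiKN k N (HKN k N t) = t ^ 2 * logWeight k N t * logWeight k N (HKN k N t ^ 2) := by
  rw [PsiKN_eq]
  exact congrArg (· * _) (HKN_eq k N t)

section HKN

variable {k : ℕ} {N : ℝ}

lemma eventually_sq_le_HKN_sq_le (hk : k ≠ 0) (hN : 0 ≤ N) :
    ∀ᶠ t in atTop, t ^ 2 ≤ HKN k N t ^ 2 ∧ HKN k N t ^ 2 ≤ (t ^ 2) ^ 4 := by
  filter_upwards [eventually_one_le_logWeight k hN, eventually_logWeight_le_sq hk hN,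
    eventually_ge_atTop 1] with t hW1 hW2 ht
  rw [HKN_eq]
  constructor
  · calc t ^ 2 ≤ t ^ 2 * logWeight k N t := le_mul_of_one_le_right (sq_nonneg t) hW1
      _ ≤ (t ^ 2 * logWeight k N t) ^ 2 :=
        le_self_pow₀ (one_le_mul_of_one_le_of_one_le (one_le_pow₀ ht) hW1) two_ne_zero
  · calc (t ^ 2 * logWeight k N t) ^ 2 ≤ (t ^ 2 * t ^ 2) ^ 2 := by gcongr
      _ = (t ^ 2) ^ 4 := by ring

lemma isTheta_PsiKN_comp_HKN (hk : k ≠ 0) (hN : 0 ≤ N) :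
    (fun t => PsiKN k N (HKN k N t)) =Θ[atTop] PhiKN k N := by
  have hH := eventually_sq_le_HKN_sq_le hk hN
  have hW_sq := isTheta_logWeight_of_le_of_le_pow tendsto_id
    ((eventually_ge_atTop 1).mono fun t ht => le_self_pow₀ ht two_ne_zero)
    (Eventually.of_forall fun t => le_rfl) two_ne_zero hk N
  have hW_H := isTheta_logWeight_of_le_of_le_pow (tendsto_pow_atTop two_ne_zero)
    (hH.mono fun _ h => h.1) (hH.mono fun _ h => h.2) four_ne_zero hk N
  simp only [PsiKN_HKN_eq]
  refine (((isTheta_refl (fun t : ℝ => t ^ 2) _).mul hW_sq.symm).mul hW_H).trans_eventuallyEq ?_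
  filter_upwards [eventually_PhiKN_eq k N] with t ht
  simp only [id, ht]
  ring

lemma eventually_nonneg_PsiKN_comp_HKN (hk : k ≠ 0) (hN : 0 ≤ N) :
    ∀ᶠ t in atTop, 0 ≤ PsiKN k N (HKN k N t) := by
  have hH := eventually_sq_le_HKN_sq_le hk hN
  have hHsq := tendsto_atTop_mono' _ (hH.mono fun _ h => h.1) (tendsto_pow_atTop two_ne_zero)
  have hW := eventually_one_le_logWeight k hN
  filter_upwards [hW, hHsq.eventually hW] with t hW₁ hW₂
  rw [PsiKN_HKN_eq]
  exact mul_nonneg (mul_nonneg (sq_nonneg t) (zero_le_one.trans hW₁)) (zero_le_one.trans hW₂)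

end HKN

/-- For `k ≥ 1` and `N > 1` there exist `c, C, t₀ > 0` depending only on `k, N`
such that `c·Φ(t) ≤ Ψ(H(t)) ≤ C·Φ(t)` for all `t ≥ t₀`. -/
theorem Psi_comp_H_comparable_Phi
    (k : ℕ) (hk : 1 ≤ k) (N : ℝ) (hN : 1 < N) :
    ∃ c : ℝ, 0 < c ∧ ∃ C : ℝ, 0 < C ∧ ∃ t₀ : ℝ, 0 < t₀ ∧
      ∀ t, t₀ ≤ t →
        c * PhiKN k N t ≤ PsiKN k N (HKN k N t) ∧
        PsiKN k N (HKN k N t) ≤ C * PhiKN k N t := by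
  have hk0 : k ≠ 0 := Nat.one_le_iff_ne_zero.1 hk
  have hN0 : 0 ≤ N := zero_le_one.trans hN.le
  refine exists_pos_bounds_of_isTheta (isTheta_PsiKN_comp_HKN hk0 hN0)
    (eventually_nonneg_PsiKN_comp_HKN hk0 hN0) ?_
  filter_upwards [eventually_PhiKN_eq k N] with t ht
  rw [ht]
  positivity
end

section
/- Let k ≥ 1 be an integer and N > 1 a real number, and define for t with t² ≥ exp^{(k)}(2N): Ψ(t) = t·(ln t²)·(ln^{(2)} t²)⋯(ln^{(k−1)} t²)·(ln^{(k)} t²)^{N}. Then there exist constants c, C, t₀ > 0 depending only on k and N such that for all t ≥ t₀, writing s = Ψ(t), one has c·s/((ln s)·(ln^{(2)} s)⋯(ln^{(k−1)} s)·(ln^{(k)} s)^{N}) ≤ t ≤ C·s/((ln s)·(ln^{(2)} s)⋯(ln^{(k−1)} s)·(ln^{(k)} s)^{N}). -/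
open Real Filter Finset Function

noncomputable def weightedProd (k : ℕ) (N : ℝ) (a : ℕ → ℝ) : ℝ :=
  (∏ i ∈ Ico 1 k, a i) * a k ^ N

section weightedProd

variable {k : ℕ} {N : ℝ}

lemma weightedProd_le_weightedProd (hk : 1 ≤ k) (hN : 0 ≤ N) {a b : ℕ → ℝ}
    (hab : ∀ i ∈ Icc 1 k, 0 ≤ a i ∧ a i ≤ b i) :
    weightedProd k N a ≤ weightedProd k N b := by
  have hIco : ∀ i ∈ Ico 1 k, 0 ≤ a i ∧ a i ≤ b i :=
    fun i hi => hab i (Ico_subset_Icc_self hi)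
  obtain ⟨hak, hakb⟩ := hab k (mem_Icc.2 ⟨hk, le_rfl⟩)
  exact mul_le_mul (prod_le_prod (fun i hi => (hIco i hi).1) fun i hi => (hIco i hi).2)
    (rpow_le_rpow hak hakb hN) (by positivity)
    (prod_nonneg fun i hi => (hIco i hi).1.trans (hIco i hi).2)

lemma weightedProd_const (k : ℕ) (N c : ℝ) :
    weightedProd k N (fun _ => c) = c ^ (k - 1) * c ^ N := by
  simp [weightedProd]

lemma weightedProd_const_mul {c : ℝ} (hc : 0 ≤ c) {a : ℕ → ℝ} (ha : 0 ≤ a k) :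
    weightedProd k N (fun i => c * a i) = c ^ (k - 1) * c ^ N * weightedProd k N a := by
  simp only [weightedProd, prod_mul_distrib, prod_const, Nat.card_Ico, mul_rpow hc ha]
  ring

end weightedProd

section iterateLog

lemma half_log_le_log_of_half_le {a b : ℝ} (ha : 0 < a) (hla : 2 ≤ log a)
    (hab : a / 2 ≤ b) : log a / 2 ≤ log b :=
  calc log a / 2 ≤ log a - log 2 := by linarith [log_two_lt_d9]
    _ = log (a / 2) := (log_div ha.ne' two_ne_zero).symm
    _ ≤ log b := log_le_log (by positivity) hab

lemma iterate_log_bounds_of_half_le {x y : ℝ} (hxy : x / 2 ≤ y) (hyx : y ≤ x) :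
    ∀ n, (∀ j ≤ n, 2 ≤ log^[j] x) → log^[n] x / 2 ≤ log^[n] y ∧ log^[n] y ≤ log^[n] x
  | 0, _ => ⟨hxy, hyx⟩
  | n + 1, hx => by
    obtain ⟨hlow, hupp⟩ := iterate_log_bounds_of_half_le hxy hyx n fun j hj => hx j (by omega)
    have ha : 2 ≤ log^[n] x := hx n (by omega)
    have hla : 2 ≤ log (log^[n] x) := by
      simpa only [iterate_succ_apply'] using hx (n + 1) le_rfl
    rw [iterate_succ_apply', iterate_succ_apply']
    exact ⟨half_log_le_log_of_half_le (by linarith) hla hlow, log_le_log (by linarith) hupp⟩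

lemma iterate_log_le_self {x : ℝ} : ∀ n, (∀ j < n, 0 ≤ log^[j] x) → log^[n] x ≤ x
  | 0, _ => le_rfl
  | n + 1, h => by
    rw [iterate_succ_apply']
    exact (log_le_self (h n n.lt_succ_self)).trans
      (iterate_log_le_self n fun j hj => h j (by omega))

variable {k : ℕ} {N : ℝ}

lemma one_le_weightedProd_iterate_log (hk : 1 ≤ k) (hN : 0 ≤ N) {x : ℝ}
    (hx : ∀ j ≤ k, 2 ≤ log^[j] x) : 1 ≤ weightedProd k N (log^[·] x) := by
  have := weightedProd_le_weightedProd (a := fun _ => 1) (b := (log^[·] x)) hk hN fun i hi =>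
    ⟨zero_le_one, by linarith [hx i (mem_Icc.1 hi).2]⟩
  simpa [weightedProd_const] using this

lemma weightedProd_iterate_log_le_log_rpow (hk : 1 ≤ k) (hN : 0 ≤ N) {x : ℝ}
    (hx : ∀ j ≤ k, 2 ≤ log^[j] x) :
    weightedProd k N (log^[·] x) ≤ log x ^ ((k - 1 : ℕ) + N) := by
  have hlog : 0 < log x := by simpa using (hx 1 hk).trans_lt' two_pos
  have hle : ∀ i ∈ Icc 1 k, 0 ≤ log^[i] x ∧ log^[i] x ≤ log x := by
    intro i hi
    obtain ⟨n, rfl⟩ : ∃ n, i = n + 1 := ⟨i - 1, by grind⟩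
    have hpos : ∀ j ≤ n, 0 ≤ log^[j] (log x) := fun j hj => by
      simpa only [iterate_succ_apply] using (hx (j + 1) (by grind)).trans' zero_le_two
    rw [iterate_succ_apply]
    exact ⟨hpos n le_rfl, iterate_log_le_self n fun j hj => hpos j hj.le⟩
  calc weightedProd k N (log^[·] x) ≤ weightedProd k N (fun _ => log x) :=
        weightedProd_le_weightedProd hk hN hle
    _ = log x ^ ((k - 1 : ℕ) + N) := by rw [weightedProd_const, rpow_add hlog, rpow_natCast]

end iterateLog

lemma eventually_two_le_iterate_log (k : ℕ) : ∀ᶠ x in atTop, ∀ j ≤ k, 2 ≤ log^[j] x :=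
  (eventually_all_finite (Set.finite_Iic k)).2 fun j _ =>
    (tendsto_log_atTop.iterate j).eventually_ge_atTop 2

lemma eventually_log_rpow_le_sqrt (r : ℝ) : ∀ᶠ x in atTop, log x ^ r ≤ √x := by
  filter_upwards [(isLittleO_log_rpow_rpow_atTop r one_half_pos).eventuallyLE,
    eventually_ge_atTop 0] with x hx hx0
  rw [sqrt_eq_rpow]
  exact (le_abs_self _).trans (by simpa [abs_of_nonneg (rpow_nonneg hx0 _)] using hx)

section Psi

variable {k : ℕ} {N : ℝ}

lemma PsiKN_eq_mul_weightedProd (k : ℕ) (N t : ℝ) :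
    PsiKN k N t = t * weightedProd k N (log^[·] (t ^ 2)) :=
  mul_assoc _ _ _

lemma weightedProd_iterate_log_PsiKN_bounds (hk : 1 ≤ k) (hN : 0 ≤ N) {t : ℝ} (ht : 0 < t)
    (hL : ∀ j ≤ k, 2 ≤ log^[j] (t ^ 2)) (hW : weightedProd k N (log^[·] (t ^ 2)) ≤ t) :
    (1 / 2) ^ (k - 1) * (1 / 2) ^ N * weightedProd k N (log^[·] (t ^ 2)) ≤
        weightedProd k N (log^[·] (PsiKN k N t)) ∧
      weightedProd k N (log^[·] (PsiKN k N t)) ≤ weightedProd k N (log^[·] (t ^ 2)) := by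
  set s := PsiKN k N t with hs_def
  have hs : t ≤ s ∧ s ≤ t ^ 2 := by
    have h1 := one_le_weightedProd_iterate_log hk hN hL
    rw [hs_def, PsiKN_eq_mul_weightedProd]
    constructor <;> nlinarith
  have hlog : log (t ^ 2) / 2 ≤ log s ∧ log s ≤ log (t ^ 2) := by
    have := log_le_log ht hs.1
    refine ⟨?_, log_le_log (by linarith) hs.2⟩
    rw [log_pow]
    push_cast
    linarith
  have hM : ∀ i ∈ Icc 1 k,
      log^[i] (t ^ 2) / 2 ≤ log^[i] s ∧ log^[i] s ≤ log^[i] (t ^ 2) := by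
    intro i hi
    obtain ⟨n, rfl⟩ : ∃ n, i = n + 1 := ⟨i - 1, by grind⟩
    simp only [iterate_succ_apply]
    exact iterate_log_bounds_of_half_le hlog.1 hlog.2 n fun j hj => by
      simpa only [iterate_succ_apply] using hL (j + 1) (by grind)
  have hLpos : ∀ i ∈ Icc 1 k, 0 ≤ log^[i] (t ^ 2) := fun i hi =>
    (hL i (mem_Icc.1 hi).2).trans' zero_le_two
  constructor
  · rw [← weightedProd_const_mul (by norm_num) (hLpos k (mem_Icc.2 ⟨hk, le_rfl⟩))]
    exact weightedProd_le_weightedProd hk hN fun i hi =>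
      ⟨by linarith [hLpos i hi], by linarith [(hM i hi).1]⟩
  · exact weightedProd_le_weightedProd hk hN fun i hi =>
      ⟨by linarith [hLpos i hi, (hM i hi).1], (hM i hi).2⟩

lemma eventually_PsiKN_div_bounds (hk : 1 ≤ k) (hN : 0 ≤ N) :
    ∀ᶠ t in atTop,
      (1 / 2) ^ (k - 1) * (1 / 2) ^ N *
          (PsiKN k N t / weightedProd k N (log^[·] (PsiKN k N t))) ≤ t ∧
        t ≤ PsiKN k N t / weightedProd k N (log^[·] (PsiKN k N t)) := by
  have hx := (eventually_two_le_iterate_log k).and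
    (eventually_log_rpow_le_sqrt ((k - 1 : ℕ) + N))
  filter_upwards [(tendsto_pow_atTop two_ne_zero).eventually hx, eventually_gt_atTop 0]
    with t ⟨hL, hr⟩ ht
  rw [sqrt_sq ht.le] at hr
  set w := weightedProd k N (log^[·] (t ^ 2))
  obtain ⟨hlow, hupp⟩ := weightedProd_iterate_log_PsiKN_bounds hk hN ht hL
    ((weightedProd_iterate_log_le_log_rpow hk hN hL).trans hr)
  have hw : 1 ≤ w := one_le_weightedProd_iterate_log hk hN hL
  set m := weightedProd k N (log^[·] (PsiKN k N t))
  have hm : 0 < m := hlow.trans_lt' (by positivity)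
  rw [PsiKN_eq_mul_weightedProd, mul_div_assoc', div_le_iff₀ hm, le_div_iff₀ hm]
  constructor <;> nlinarith

end Psi

/-- For `k ≥ 1`, `N > 1` there exist `c, C, t₀ > 0` depending only on `k, N`
such that for all `t ≥ t₀`, writing `s = Ψ(t)`,
`c·s/((ln s)·(ln^[2] s)⋯(ln^[k-1] s)·(ln^[k] s)^N) ≤ t ≤ C·s/((ln s)⋯(ln^[k] s)^N)`. -/
theorem Psi_inverse_comparable
    (k : ℕ) (hk : 1 ≤ k) (N : ℝ) (hN : 1 < N) :
    ∃ c : ℝ, 0 < c ∧ ∃ C : ℝ, 0 < C ∧ ∃ t₀ : ℝ, 0 < t₀ ∧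
      ∀ t, t₀ ≤ t →
        c * (PsiKN k N t /
            ((∏ i ∈ Finset.Ico 1 k, Real.log^[i] (PsiKN k N t)) *
              (Real.log^[k] (PsiKN k N t)) ^ N)) ≤ t ∧
        t ≤ C * (PsiKN k N t /
            ((∏ i ∈ Finset.Ico 1 k, Real.log^[i] (PsiKN k N t)) *
              (Real.log^[k] (PsiKN k N t)) ^ N)) := by
  obtain ⟨t₀, h⟩ :=
    eventually_atTop.1 (eventually_PsiKN_div_bounds hk (zero_le_one.trans hN.le))
  refine ⟨(1 / 2) ^ (k - 1) * (1 / 2) ^ N, by positivity, 1, one_pos, max t₀ 1, by positivity,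
    fun t ht => ?_⟩
  rw [one_mul]
  exact h t (le_of_max_le_left ht)
end
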